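/- Let A and B be Hopf algebras with a skew Hopf pairing φ: A × B → k. Then the Schrödinger representation of the quantum double D_φ(A,B) on A, given by (a⊗1)·x = ∑ a₍₁₎ x S(a₍₂₎) and (1⊗b)·x = ∑ φ(x₍₁₎, S(b)) x₍₂₎, makes A a D_φ(A,B)-module algebra: the action satisfies d·(xy) = ∑ (d₍₁₎·x)(d₍₂₎·y) and d·1 = ε(d)1 for all d ∈ D_φ(A,B), x, y ∈ A. -/

import Mathlib

open TensorProduct

variable (k : Type*) [Field k]
variable (A : Type*) [Ring A] [HopfAlgebra k A]
variable (B : Type*) [Ring B] [HopfAlgebra k B]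

/-- The adjoint action `A ⊗ A → A`, `a ⊗ x ↦ ∑ a₍₁₎ x S(a₍₂₎)`. -/
noncomputable def adAct : A ⊗[k] A →ₗ[k] A :=
  (LinearMap.mul' k A) ∘ₗ
    (LinearMap.lTensor A (LinearMap.mul' k A)) ∘ₗ
    (LinearMap.lTensor A
      ((TensorProduct.comm k A A).toLinearMap ∘ₗ
        (LinearMap.rTensor A (HopfAlgebra.antipode (R := k) (A := A))))) ∘ₗ
    (TensorProduct.assoc k A A A).toLinearMap ∘ₗ
    (LinearMap.rTensor A (Coalgebra.comul (R := k) (A := A)))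

/-- The coaction part `B ⊗ A → A`, `b ⊗ x ↦ ∑ φ(x₍₁₎, S(b)) x₍₂₎`. -/
noncomputable def coAct (φ : A ⊗[k] B →ₗ[k] k) : B ⊗[k] A →ₗ[k] A :=
  (TensorProduct.lid k A).toLinearMap ∘ₗ
    (LinearMap.rTensor A φ) ∘ₗ
    (LinearMap.rTensor A
      ((LinearMap.lTensor A (HopfAlgebra.antipode (R := k) (A := B))) ∘ₗ
        (TensorProduct.comm k B A).toLinearMap)) ∘ₗ
    (TensorProduct.assoc k B A A).symm.toLinearMap ∘ₗ
    (LinearMap.lTensor B (Coalgebra.comul (R := k) (A := A)))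

/-- The Schrödinger representation of the quantum double `D_φ(A,B) = A ⊗ B` on `A`:
`(a ⊗ b) ⊗ x ↦ (a ⊗ 1)·((1 ⊗ b)·x) = ∑ φ(x₍₁₎, S(b)) a₍₁₎ x₍₂₎ S(a₍₂₎)`. -/
noncomputable def schrodinger (φ : A ⊗[k] B →ₗ[k] k) : (A ⊗[k] B) ⊗[k] A →ₗ[k] A :=
  (adAct k A) ∘ₗ (LinearMap.lTensor A (coAct k A B φ)) ∘ₗ
    (TensorProduct.assoc k A B A).toLinearMap

/-- The comultiplication of the quantum double `D_φ(A,B)`, i.e. the tensor product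
coalgebra structure on `A ⊗ B`. -/
noncomputable def comulD : A ⊗[k] B →ₗ[k] (A ⊗[k] B) ⊗[k] (A ⊗[k] B) :=
  (TensorProduct.tensorTensorTensorComm k A A B B).toLinearMap ∘ₗ
    (TensorProduct.map (Coalgebra.comul (R := k) (A := A))
      (Coalgebra.comul (R := k) (A := B)))

/-- The counit of the quantum double `D_φ(A,B)`. -/
noncomputable def counitD : A ⊗[k] B →ₗ[k] k :=
  (TensorProduct.lid k k).toLinearMap ∘ₗ
    (TensorProduct.map (Coalgebra.counit (R := k) (A := A))
      (Coalgebra.counit (R := k) (A := B)))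

/-!
For fixed `x`, the adjoint action `a ↦ ∑ a₍₁₎ x S(a₍₂₎)` is the convolution product of right
multiplication by `x` with the antipode; since `S * ((· * y) * S) = (y * ·) ∘ S`, it is
multiplicative in `x`. The action `b ↦ ∑ φ(x₍₁₎, S b) x₍₂₎` is multiplicative because
`φ(x y, ·)` splits along the coproduct and `S` reverses it: `Δ (S b) = ∑ S b₍₂₎ ⊗ S b₍₁₎`, as
both sides are convolution inverses of `Δ`. The Schrödinger action is the composite of the
two, and both send `1` to `ε(·) 1`.
-/

open Coalgebra WithConv

namespace LinearMap

variable {R C A : Type*} [CommSemiring R] [AddCommMonoid C] [Module R C] [Coalgebra R C]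
  [Semiring A] [Algebra R A]

lemma mulRight_comp_convMul (y : A) (f g : WithConv (C →ₗ[R] A)) :
    toConv (mulRight R y ∘ₗ (f * g).ofConv) = f * toConv (mulRight R y ∘ₗ g.ofConv) := by
  ext c
  simp [(ℛ R c).convMul_apply, mul_assoc]

lemma mulRight_comp_convMul_eq_convMul_mulLeft_comp (y : A) (f g : WithConv (C →ₗ[R] A)) :
    toConv (mulRight R y ∘ₗ f.ofConv) * g = f * toConv (mulLeft R y ∘ₗ g.ofConv) := by
  ext c
  simp [(ℛ R c).convMul_apply, mul_assoc]

end LinearMap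

namespace HopfAlgebra

variable {R H : Type*} [CommSemiring R] [Semiring H] [HopfAlgebra R H]

lemma algHom_comp_antipode_convMul {B : Type*} [Semiring B] [Algebra R B] (g : H →ₐ[R] B) :
    toConv (g.toLinearMap ∘ₗ antipode R) * toConv g.toLinearMap = 1 := by
  have := LinearMap.algHom_comp_convMul_distrib g (toConv (antipode R)) (toConv .id)
  rw [LinearMap.antipode_mul_id] at this
  ext a
  simpa using congr($this a).symm

theorem comul_comp_antipode :
    comul ∘ₗ antipode R = map (antipode R) (antipode R) ∘ₗ
      (TensorProduct.comm R H H).toLinearMap ∘ₗ comul (R := R) (A := H) := by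
  set l := (Algebra.TensorProduct.includeLeft : H →ₐ[R] H ⊗[R] H)
  set r := (Algebra.TensorProduct.includeRight : H →ₐ[R] H ⊗[R] H)
  have hcomul : toConv (comul (R := R) (A := H)) =
      toConv l.toLinearMap * toConv r.toLinearMap := by
    ext a; simp [(ℛ R a).convMul_apply, l, r, ← (ℛ R a).eq]
  have hswap : toConv (map (antipode R) (antipode R) ∘ₗ
      (TensorProduct.comm R H H).toLinearMap ∘ₗ comul (R := R) (A := H)) =
      toConv (r.toLinearMap ∘ₗ antipode R) * toConv (l.toLinearMap ∘ₗ antipode R) := by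
    ext a; simp [(ℛ R a).convMul_apply, l, r, ← (ℛ R a).eq]
  have hleft : toConv (map (antipode R) (antipode R) ∘ₗ
      (TensorProduct.comm R H H).toLinearMap ∘ₗ comul (R := R) (A := H)) * toConv comul = 1 := by
    rw [hswap, hcomul, mul_assoc, ← mul_assoc (toConv (l.toLinearMap ∘ₗ antipode R)),
      algHom_comp_antipode_convMul, one_mul, algHom_comp_antipode_convMul]
  exact congr_arg ofConv (left_inv_eq_right_inv hleft LinearMap.comul_right_inv).symm

@[simps]
protected def _root_.Coalgebra.Repr.antipode {b : H} {ι : Type*} (r : Repr R b ι) :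
    Repr R (antipode R b) ι where
  index := r.index
  left i := antipode R (r.right i)
  right i := antipode R (r.left i)
  eq := by
    rw [← LinearMap.comp_apply comul (antipode R) b, comul_comp_antipode]
    simp [← r.eq]

variable (R) in
/-- The adjoint action `a ↦ ∑ a₍₁₎ x S(a₍₂₎)` on a fixed `x`, in the convolution algebra. -/
noncomputable def adjointActionAt (x : H) : WithConv (H →ₗ[R] H) :=
  toConv (LinearMap.mulRight R x) * toConv (antipode R)

lemma antipode_convMul_adjointActionAt (y : H) :
    toConv (antipode R) * adjointActionAt R y =
      toConv (LinearMap.mulLeft R y ∘ₗ antipode R) := by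
  have hS : toConv (antipode R) * toConv (LinearMap.mulRight R y) =
      toConv (LinearMap.mulRight R y ∘ₗ (1 : WithConv (H →ₗ[R] H)).ofConv) := by
    rw [← LinearMap.antipode_mul_id, LinearMap.mulRight_comp_convMul]
    rfl
  rw [adjointActionAt, ← mul_assoc, hS, LinearMap.mulRight_comp_convMul_eq_convMul_mulLeft_comp,
    one_mul]

lemma adjointActionAt_mul (x y : H) :
    adjointActionAt R (x * y) = adjointActionAt R x * adjointActionAt R y := by
  rw [adjointActionAt, LinearMap.mulRight_mul,
    LinearMap.mulRight_comp_convMul_eq_convMul_mulLeft_comp, ← antipode_convMul_adjointActionAt,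
    ← mul_assoc]
  rfl

lemma adjointActionAt_one : adjointActionAt R (1 : H) = 1 := by
  rw [adjointActionAt, LinearMap.mulRight_one, LinearMap.id_mul_antipode]

end HopfAlgebra

section SchrodingerRepresentation

variable {k A B}

lemma adAct_tmul (a x : A) : adAct k A (a ⊗ₜ x) = HopfAlgebra.adjointActionAt k x a := by
  simp [adAct, HopfAlgebra.adjointActionAt, (ℛ k a).convMul_apply, ← (ℛ k a).eq, sum_tmul,
    mul_assoc]

lemma adAct_tmul_mul (a x y : A) {ι : Type*} (r : Repr k a ι) :
    adAct k A (a ⊗ₜ (x * y)) =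
      ∑ i ∈ r.index, adAct k A (r.left i ⊗ₜ x) * adAct k A (r.right i ⊗ₜ y) := by
  simp only [adAct_tmul, HopfAlgebra.adjointActionAt_mul, r.convMul_apply]

lemma adAct_tmul_one (a : A) : adAct k A (a ⊗ₜ 1) = counit (R := k) a • 1 := by
  simp [adAct_tmul, HopfAlgebra.adjointActionAt_one, Algebra.algebraMap_eq_smul_one]

lemma coAct_tmul (φ : A ⊗[k] B →ₗ[k] k) (b : B) (x : A) {ι : Type*} (r : Repr k x ι) :
    coAct k A B φ (b ⊗ₜ x) =
      ∑ i ∈ r.index, φ (r.left i ⊗ₜ HopfAlgebra.antipode k b) • r.right i := by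
  simp [coAct, ← r.eq, tmul_sum]

lemma coAct_tmul_one (φ : A ⊗[k] B →ₗ[k] k)
    (hφ4 : ∀ b : B, φ ((1 : A) ⊗ₜ b) = counit (R := k) b) (b : B) :
    coAct k A B φ (b ⊗ₜ 1) = counit (R := k) b • 1 := by
  simp [coAct, Algebra.TensorProduct.one_def, hφ4]

lemma schrodinger_tmul (φ : A ⊗[k] B →ₗ[k] k) (a : A) (b : B) (x : A) :
    schrodinger k A B φ ((a ⊗ₜ b) ⊗ₜ x) = adAct k A (a ⊗ₜ coAct k A B φ (b ⊗ₜ x)) := rfl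

lemma schrodinger_tmul_one (φ : A ⊗[k] B →ₗ[k] k)
    (hφ4 : ∀ b : B, φ ((1 : A) ⊗ₜ b) = counit (R := k) b) (d : A ⊗[k] B) :
    schrodinger k A B φ (d ⊗ₜ 1) = counitD k A B d • 1 := by
  induction d using TensorProduct.induction_on with
  | zero => simp
  | tmul a b =>
    rw [schrodinger_tmul, coAct_tmul_one φ hφ4, tmul_smul, map_smul, adAct_tmul_one, smul_smul]
    simp [counitD, mul_comm]
  | add d d' hd hd' => rw [add_tmul, map_add, hd, hd', map_add, add_smul]

lemma comulD_eq_comul : comulD k A B = comul := rfl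

variable (φ : A ⊗[k] B →ₗ[k] k)
  (hφ2 : φ ∘ₗ (LinearMap.rTensor B (LinearMap.mul' k A)) =
      (LinearMap.mul' k k) ∘ₗ (TensorProduct.map φ φ) ∘ₗ
        (TensorProduct.tensorTensorTensorComm k A A B B).toLinearMap ∘ₗ
        (LinearMap.lTensor (A ⊗[k] A) (Coalgebra.comul (R := k) (A := B))) ∘ₗ
        (LinearMap.rTensor B (TensorProduct.comm k A A).toLinearMap))
include hφ2

lemma pairing_mul_tmul_antipode (x y : A) (b : B) {ι : Type*} (r : Repr k b ι) :
    φ ((x * y) ⊗ₜ HopfAlgebra.antipode k b) = ∑ l ∈ r.index,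
      φ (x ⊗ₜ HopfAlgebra.antipode k (r.left l)) *
        φ (y ⊗ₜ HopfAlgebra.antipode k (r.right l)) := by
  have := congr($hφ2 ((x ⊗ₜ y) ⊗ₜ HopfAlgebra.antipode k b))
  simp only [LinearMap.comp_apply, LinearMap.rTensor_tmul, LinearMap.mul'_apply] at this
  simp [this, ← r.antipode.eq, tmul_sum, mul_comm]

lemma coAct_tmul_mul (b : B) (x y : A) {ι : Type*} (r : Repr k b ι) :
    coAct k A B φ (b ⊗ₜ (x * y)) =
      ∑ l ∈ r.index, coAct k A B φ (r.left l ⊗ₜ x) * coAct k A B φ (r.right l ⊗ₜ y) := by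
  simp only [coAct_tmul φ _ (x * y) ((ℛ k x).mul (ℛ k y)), coAct_tmul φ _ x (ℛ k x),
    coAct_tmul φ _ y (ℛ k y), Repr.mul_index, Repr.mul_left, Repr.mul_right, Finset.sum_product,
    pairing_mul_tmul_antipode φ hφ2 _ _ b r, Finset.sum_smul, Finset.sum_mul, Finset.mul_sum,
    smul_mul_smul_comm]
  rw [Finset.sum_congr rfl fun _ _ => Finset.sum_comm, Finset.sum_comm]
  exact Finset.sum_congr rfl fun _ _ => Finset.sum_comm

lemma schrodinger_tmul_mul (a : A) (b : B) (x y : A) {ι κ : Type*} (ra : Repr k a ι)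
    (rb : Repr k b κ) :
    schrodinger k A B φ ((a ⊗ₜ b) ⊗ₜ (x * y)) = ∑ p ∈ (ra.tmul rb).index,
      schrodinger k A B φ ((ra.tmul rb).left p ⊗ₜ x) *
        schrodinger k A B φ ((ra.tmul rb).right p ⊗ₜ y) := by
  rw [schrodinger_tmul, coAct_tmul_mul φ hφ2 b x y rb, tmul_sum, map_sum, Repr.tmul_index,
    Finset.sum_product, Finset.sum_comm]
  simp only [adAct_tmul_mul _ _ _ ra, schrodinger_tmul, Repr.tmul_left, Repr.tmul_right]

lemma schrodinger_comp_lTensor_mul :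
    (schrodinger k A B φ) ∘ₗ (LinearMap.lTensor (A ⊗[k] B) (LinearMap.mul' k A)) =
      (LinearMap.mul' k A) ∘ₗ
        (TensorProduct.map (schrodinger k A B φ) (schrodinger k A B φ)) ∘ₗ
        (TensorProduct.tensorTensorTensorComm k (A ⊗[k] B) (A ⊗[k] B) A A).toLinearMap ∘ₗ
        (LinearMap.rTensor (A ⊗[k] A) (comulD k A B)) := by
  refine TensorProduct.ext_fourfold' fun a b x y => ?_
  simp only [LinearMap.comp_apply, LinearMap.lTensor_tmul, LinearMap.rTensor_tmul,
    LinearMap.mul'_apply]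
  rw [schrodinger_tmul_mul φ hφ2 a b x y (ℛ k a) (ℛ k b), comulD_eq_comul,
    ← ((ℛ k a).tmul (ℛ k b)).eq]
  simp [sum_tmul]

end SchrodingerRepresentation

theorem stmt6 (φ : A ⊗[k] B →ₗ[k] k)
    -- skew Hopf pairing axioms:
    (hφ2 : φ ∘ₗ (LinearMap.rTensor B (LinearMap.mul' k A)) =
      (LinearMap.mul' k k) ∘ₗ (TensorProduct.map φ φ) ∘ₗ
        (TensorProduct.tensorTensorTensorComm k A A B B).toLinearMap ∘ₗ
        (LinearMap.lTensor (A ⊗[k] A) (Coalgebra.comul (R := k) (A := B))) ∘ₗ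
        (LinearMap.rTensor B (TensorProduct.comm k A A).toLinearMap))
    (hφ4 : ∀ b : B, φ ((1 : A) ⊗ₜ b) = Coalgebra.counit (R := k) b) :
    -- `A` is a `D_φ(A,B)`-module algebra:
    (schrodinger k A B φ) ∘ₗ (LinearMap.lTensor (A ⊗[k] B) (LinearMap.mul' k A)) =
        (LinearMap.mul' k A) ∘ₗ
          (TensorProduct.map (schrodinger k A B φ) (schrodinger k A B φ)) ∘ₗ
          (TensorProduct.tensorTensorTensorComm k (A ⊗[k] B) (A ⊗[k] B) A A).toLinearMap ∘ₗ
          (LinearMap.rTensor (A ⊗[k] A) (comulD k A B)) ∧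
      ∀ d : A ⊗[k] B, (schrodinger k A B φ) (d ⊗ₜ (1 : A)) = (counitD k A B) d • (1 : A) :=
  ⟨schrodinger_comp_lTensor_mul φ hφ2, schrodinger_tmul_one φ hφ4⟩
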